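/- arXiv:1706.09113 — 3 statements merged into one kernel-verified Lean document; each statement's English description precedes it below -/
import Mathlib

section
/- Let d ≥ 1 and let A be a d×d real symmetric positive semidefinite matrix. Then (det A)^(1/d) = (1/d) · inf { tr(A·B) : B is a d×d real symmetric positive definite matrix with det B = 1 }. -/
/-!
Lower bound: with `R = √B`, `tr (A B) = tr (R A R)` and `det (R A R) = det A · det B`, so AM–GM
on the eigenvalues of the positive semidefinite matrix `R A R` gives
`d · (det A · det B)^(1/d) ≤ tr (A B)`.
Upper bound: for invertible `A` the bound is attained at `B = (det A)^(1/d) · A⁻¹`; a singular `A`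
is approached by `A + δ • 1`, since `tr (A B) ≤ tr ((A + δ • 1) B)` and the right side tends to
`d · (det A)^(1/d)` as `δ → 0⁺`.
-/

open Matrix Filter Topology

namespace Matrix

variable {n : Type*} [Fintype n] [DecidableEq n] [Nonempty n] {A B : Matrix n n ℝ}

theorem PosSemidef.det_rpow_inv_card_le_trace_div_card (hA : A.PosSemidef) :
    A.det ^ (Fintype.card n : ℝ)⁻¹ ≤ A.trace / Fintype.card n := by
  have := Real.geom_mean_le_arith_mean Finset.univ (fun _ ↦ 1) hA.1.eigenvalues
    (fun _ _ ↦ zero_le_one) (by simp [Fintype.card_pos]) (fun i _ ↦ hA.eigenvalues_nonneg i)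
  simpa [hA.1.det_eq_prod_eigenvalues, hA.1.trace_eq_sum_eigenvalues] using this

open scoped MatrixOrder in
theorem PosSemidef.det_mul_rpow_inv_card_le_trace_mul_div_card (hA : A.PosSemidef)
    (hB : B.PosSemidef) :
    (A * B).det ^ (Fintype.card n : ℝ)⁻¹ ≤ (A * B).trace / Fintype.card n := by
  set R := CFC.sqrt B
  have hRR : R * R = B := CFC.sqrt_mul_sqrt_self B hB.nonneg
  have hR : Rᴴ = R := (CFC.sqrt_nonneg B).posSemidef.1.eq
  have hRAR : (R * A * R).PosSemidef := by
    simpa only [hR] using hA.mul_mul_conjTranspose_same R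
  have hdet : (R * A * R).det = (A * B).det := by
    rw [← hRR, det_mul, det_mul, det_mul, det_mul]; ring
  have htrace : (R * A * R).trace = (A * B).trace := by
    rw [← hRR, mul_assoc, trace_mul_comm, mul_assoc]
  simpa [hdet, htrace] using hRAR.det_rpow_inv_card_le_trace_div_card

theorem PosDef.exists_posDef_det_eq_one_trace_mul_eq (hA : A.PosDef) :
    ∃ B : Matrix n n ℝ, B.PosDef ∧ B.det = 1 ∧
      (A * B).trace = Fintype.card n * A.det ^ (Fintype.card n : ℝ)⁻¹ := by
  set c := A.det ^ (Fintype.card n : ℝ)⁻¹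
  have hc : 0 < c := Real.rpow_pos_of_pos hA.det_pos _
  have hcard : c ^ Fintype.card n = A.det := by
    rw [← Real.rpow_natCast, ← Real.rpow_mul hA.det_pos.le, inv_mul_cancel₀ (by positivity),
      Real.rpow_one]
  have hunit : IsUnit A.det := hA.det_pos.ne'.isUnit
  refine ⟨c • A⁻¹, hA.inv.smul hc, ?_, ?_⟩
  · rw [det_smul, det_nonsing_inv, hcard, Ring.mul_inverse_cancel _ hunit]
  · rw [Matrix.mul_smul, trace_smul, mul_nonsing_inv _ hunit, trace_one, smul_eq_mul, mul_comm]

end Matrix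

/-- **Concavity-of-determinant lemma, part (i).**
Let `d ≥ 1` and let `A` be a `d×d` real symmetric positive semidefinite matrix. Then
`(det A)^(1/d) = (1/d) · inf { tr (A·B) : B symmetric positive definite, det B = 1 }`. -/
theorem det_rpow_inv_eq_inf_trace
    (d : ℕ) (hd : 1 ≤ d) (A : Matrix (Fin d) (Fin d) ℝ)
    (hA : A.PosSemidef) :
    A.det ^ ((1 : ℝ) / d) =
      (1 / d : ℝ) * sInf {t : ℝ | ∃ B : Matrix (Fin d) (Fin d) ℝ,
        B.PosDef ∧ B.det = 1 ∧ t = (A * B).trace} := by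
  have : Nonempty (Fin d) := ⟨⟨0, hd⟩⟩
  set S := {t : ℝ | ∃ B : Matrix (Fin d) (Fin d) ℝ, B.PosDef ∧ B.det = 1 ∧ t = (A * B).trace}
  have hlower : ∀ t ∈ S, d * A.det ^ ((1 : ℝ) / d) ≤ t := by
    rintro _ ⟨B, hB, hBdet, rfl⟩
    have := hA.det_mul_rpow_inv_card_le_trace_mul_div_card hB.posSemidef
    rw [det_mul, hBdet, mul_one, Fintype.card_fin, le_div_iff₀' (by positivity)] at this
    simpa only [one_div] using this
  have hupper : ∀ δ : ℝ, 0 < δ → sInf S ≤ d * (A + δ • 1).det ^ ((1 : ℝ) / d) := by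
    intro δ hδ
    obtain ⟨B, hB, hBdet, htrace⟩ :=
      (PosDef.posSemidef_add hA (PosDef.one.smul hδ)).exists_posDef_det_eq_one_trace_mul_eq
    calc sInf S ≤ (A * B).trace := csInf_le ⟨_, hlower⟩ ⟨B, hB, hBdet, rfl⟩
      _ ≤ ((A + δ • 1) * B).trace := by
        simpa [add_mul, trace_add] using mul_nonneg hδ.le hB.posSemidef.trace_nonneg
      _ = d * (A + δ • 1).det ^ ((1 : ℝ) / d) := by
        simpa only [Fintype.card_fin, one_div] using htrace
  have hcont : Continuous fun δ : ℝ ↦ (d : ℝ) * (A + δ • 1).det ^ ((1 : ℝ) / d) := by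
    fun_prop (disch := positivity)
  have hlim : Tendsto (fun δ : ℝ ↦ (d : ℝ) * (A + δ • 1).det ^ ((1 : ℝ) / d)) (𝓝[>] 0)
      (𝓝 (d * A.det ^ ((1 : ℝ) / d))) := by
    simpa using (hcont.tendsto 0).mono_left nhdsWithin_le_nhds
  have hle : sInf S ≤ d * A.det ^ ((1 : ℝ) / d) :=
    ge_of_tendsto hlim (eventually_nhdsWithin_of_forall hupper)
  rw [le_antisymm hle (le_csInf ⟨_, 1, PosDef.one, det_one, rfl⟩ hlower)]
  field_simp
end

section
/- Let d ≥ 1 and let M be a d×d real symmetric positive semidefinite matrix. Then det M = inf over all orthonormal bases (v_1,…,v_d) of ℝ^d of the product ∏_{j=1}^d v_j^T M v_j, and the infimum is attained (namely at an orthonormal eigenbasis of M). -/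
/-!
Rows `v j` of a matrix `V` with `V * Vᵀ = 1` turn `∏ j, v jᵀ M v j` into the product of the
diagonal entries of `V M Vᵀ`, a PSD matrix with the same determinant, so the lower bound is
Hadamard's inequality `det A ≤ ∏ i, A i i`. For that, rescale `A` to unit diagonal and bound the
eigenvalues by `μ ≤ exp (μ - 1)`, which gives `det ≤ exp (trace - n) = 1`. An orthonormal
eigenbasis of `M` attains the bound.
-/

namespace Matrix

variable {n : Type*} [Fintype n]

theorem mul_mul_transpose_apply {R : Type*} [CommSemiring R] (V M : Matrix n n R) (i j : n) :
    (V * M * Vᵀ) i j = V i ⬝ᵥ M *ᵥ V j := by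
  rw [mul_apply', mul_apply_eq_vecMul, dotProduct_mulVec]
  rfl

theorem det_mul_mul_transpose_of_mul_transpose_eq_one [DecidableEq n] {R : Type*} [CommRing R]
    {V : Matrix n n R} (hV : V * Vᵀ = 1) (M : Matrix n n R) : (V * M * Vᵀ).det = M.det := by
  have hsq : V.det * V.det = 1 := by
    simpa only [det_mul, det_transpose, det_one] using congrArg det hV
  rw [det_mul, det_mul, det_transpose, mul_right_comm, hsq, one_mul]

namespace PosSemidef

variable [DecidableEq n] {A : Matrix n n ℝ}

theorem det_le_exp_trace_sub_card (hA : A.PosSemidef) :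
    A.det ≤ Real.exp (A.trace - Fintype.card n) := by
  rw [hA.1.det_eq_prod_eigenvalues, hA.1.trace_eq_sum_eigenvalues]
  simp only [RCLike.ofReal_real_eq_id, id]
  calc ∏ i, hA.1.eigenvalues i ≤ ∏ i, Real.exp (hA.1.eigenvalues i - 1) :=
        Finset.prod_le_prod (fun i _ => hA.eigenvalues_nonneg i)
          fun i _ => by linarith [Real.add_one_le_exp (hA.1.eigenvalues i - 1)]
    _ = Real.exp (∑ i, hA.1.eigenvalues i - Fintype.card n) := by
        rw [← Real.exp_sum, Finset.sum_sub_distrib]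
        simp

theorem det_eq_zero_of_diag_eq_zero (hA : A.PosSemidef) {i : n} (hi : A i i = 0) :
    A.det = 0 := by
  have hker : A *ᵥ Pi.single i 1 = 0 := by
    rw [← hA.dotProduct_mulVec_zero_iff]
    simpa [mulVec_single_one] using hi
  exact exists_mulVec_eq_zero_iff.mp ⟨Pi.single i 1, by simp, hker⟩

theorem det_le_prod_diag (hA : A.PosSemidef) : A.det ≤ ∏ i, A i i := by
  by_cases hzero : ∃ i, A i i = 0
  · obtain ⟨i, hi⟩ := hzero
    rw [hA.det_eq_zero_of_diag_eq_zero hi]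
    exact Finset.prod_nonneg fun j _ => hA.diag_nonneg
  push Not at hzero
  have hpos : 0 < ∏ i, A i i := Finset.prod_pos fun i _ => hA.diag_nonneg.lt_of_ne' (hzero i)
  set c : n → ℝ := fun i => (Real.sqrt (A i i))⁻¹
  have hc : ∀ i, c i * c i = (A i i)⁻¹ := fun i => by
    rw [← mul_inv, Real.mul_self_sqrt hA.diag_nonneg]
  set B := diagonal c * A * diagonal c
  have hB : B.PosSemidef := by
    simpa [B] using hA.conjTranspose_mul_mul_same (diagonal c)
  have htrace : B.trace = Fintype.card n := by
    simp [B, trace, mul_diagonal, diagonal_mul, mul_right_comm _ _ (c _), hc, hzero]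
  have hdet : B.det = A.det * (∏ i, A i i)⁻¹ := by
    simp only [B, det_mul, det_diagonal, ← Finset.prod_inv_distrib, ← hc, Finset.prod_mul_distrib]
    ring
  have := hB.det_le_exp_trace_sub_card
  rwa [htrace, sub_self, Real.exp_zero, hdet, mul_inv_le_iff₀ hpos, one_mul] at this

theorem det_le_prod_dotProduct_mulVec (hA : A.PosSemidef) {v : n → n → ℝ}
    (hv : ∀ i j, v i ⬝ᵥ v j = if i = j then 1 else 0) :
    A.det ≤ ∏ j, v j ⬝ᵥ A *ᵥ v j := by
  set V : Matrix n n ℝ := of v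
  have hV : V * Vᵀ = 1 := by
    ext i j
    exact (mul_apply').trans ((hv i j).trans one_apply.symm)
  calc A.det = (V * A * Vᵀ).det := (det_mul_mul_transpose_of_mul_transpose_eq_one hV A).symm
    _ ≤ ∏ j, (V * A * Vᵀ) j j := (hA.mul_mul_conjTranspose_same V).det_le_prod_diag
    _ = ∏ j, v j ⬝ᵥ A *ᵥ v j := by simp only [mul_mul_transpose_apply]; rfl

end PosSemidef

theorem IsHermitian.exists_orthonormal_prod_dotProduct_mulVec_eq_det [DecidableEq n]
    {A : Matrix n n ℝ} (hA : A.IsHermitian) :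
    ∃ v : n → n → ℝ, (∀ i j, v i ⬝ᵥ v j = if i = j then 1 else 0) ∧
      A.det = ∏ j, v j ⬝ᵥ A *ᵥ v j := by
  set b := hA.eigenvectorBasis
  have hb : ∀ i j, ⇑(b i) ⬝ᵥ ⇑(b j) = if i = j then 1 else 0 := fun i j => by
    simpa [PiLp.inner_apply, dotProduct, mul_comm] using orthonormal_iff_ite.mp b.orthonormal i j
  refine ⟨fun j => b j, hb, ?_⟩
  rw [hA.det_eq_prod_eigenvalues]
  refine Finset.prod_congr rfl fun j _ => ?_
  simp [b, hA.mulVec_eigenvectorBasis, dotProduct_smul, hb j j]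

end Matrix

theorem det_eq_min_prod_quadratic_forms_general
    (d : ℕ) (M : Matrix (Fin d) (Fin d) ℝ)
    (hM : M.PosSemidef) :
    IsLeast {t : ℝ | ∃ v : Fin d → (Fin d → ℝ),
        (∀ i j, v i ⬝ᵥ v j = if i = j then 1 else 0) ∧
        t = ∏ j, v j ⬝ᵥ M.mulVec (v j)} M.det := by
  refine ⟨hM.isHermitian.exists_orthonormal_prod_dotProduct_mulVec_eq_det, ?_⟩
  rintro t ⟨v, hv, rfl⟩
  exact hM.det_le_prod_dotProduct_mulVec hv

/-- **Determinant formula over orthonormal bases.**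
Let `d ≥ 1` and let `M` be a `d×d` real symmetric positive semidefinite matrix. Then
`det M` is the minimum (infimum, and it is attained) over all orthonormal bases
`(v_1,…,v_d)` of `ℝ^d` of `∏_j v_jᵀ M v_j`. -/
theorem det_eq_min_prod_quadratic_forms
    (d : ℕ) (hd : 1 ≤ d) (M : Matrix (Fin d) (Fin d) ℝ)
    (hM : M.PosSemidef) :
    IsLeast {t : ℝ | ∃ v : Fin d → (Fin d → ℝ),
        (∀ i j, v i ⬝ᵥ v j = if i = j then 1 else 0) ∧
        t = ∏ j, v j ⬝ᵥ M.mulVec (v j)} M.det :=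
  det_eq_min_prod_quadratic_forms_general d M hM
end

section
/- Let d ≥ 1, let Ω ⊆ ℝ^d, let w : Ω → ℝ, let x ∈ Ω, let δ > 0, and let (v_1,…,v_d) be an orthonormal basis of ℝ^d such that x + δ·v_j ∈ Ω and x − δ·v_j ∈ Ω for all j. Assume the subdifferential ∂w(x) is nonempty. Then the Lebesgue measure of ∂w(x) satisfies |∂w(x)| ≤ δ^d · ∏_{j=1}^d ∇²_δ w(x; v_j), where ∇²_δ w(x; v) := (w(x + δv) − 2w(x) + w(x − δv))/δ² is the centered second difference of w at x in direction v with step δ. -/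
open MeasureTheory Matrix

/-- **Subdifferential vs discrete operator (Corollary 4.3).**
Let `Ω ⊆ ℝ^d`, `w : Ω → ℝ`, `x ∈ Ω`, `δ > 0`, and `(v_1,…,v_d)` an orthonormal basis
with `x ± δ v_j ∈ Ω` for all `j`. If the subdifferential `∂w(x)` is nonempty, then its
Lebesgue measure satisfies `|∂w(x)| ≤ δ^d · ∏_j ∇²_δ w(x; v_j)`, where
`∇²_δ w(x; v) = (w(x + δ v) − 2 w(x) + w(x − δ v))/δ²`. -/
theorem volume_subdifferential_le
    (d : ℕ) (hd : 1 ≤ d) (Ω : Set (Fin d → ℝ)) (w : (Fin d → ℝ) → ℝ)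
    (x : Fin d → ℝ) (hx : x ∈ Ω) (δ : ℝ) (hδ : 0 < δ)
    (v : Fin d → (Fin d → ℝ))
    (hv : ∀ i j, v i ⬝ᵥ v j = if i = j then 1 else 0)
    (hmem : ∀ j, x + δ • v j ∈ Ω ∧ x - δ • v j ∈ Ω)
    (hne : {p : Fin d → ℝ | ∀ y ∈ Ω, w x + p ⬝ᵥ (y - x) ≤ w y}.Nonempty) :
    volume {p : Fin d → ℝ | ∀ y ∈ Ω, w x + p ⬝ᵥ (y - x) ≤ w y} ≤
      ENNReal.ofReal (δ ^ d *
        ∏ j, (w (x + δ • v j) - 2 * w x + w (x - δ • v j)) / δ ^ 2) := by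
  set S := {p : Fin d → ℝ | ∀ y ∈ Ω, w x + p ⬝ᵥ (y - x) ≤ w y} with hS
  set a : Fin d → ℝ := fun j => (w x - w (x - δ • v j)) / δ with ha
  set b : Fin d → ℝ := fun j => (w (x + δ • v j) - w x) / δ with hb
  set M : Matrix (Fin d) (Fin d) ℝ := Matrix.of v with hM
  have hδ' : δ ≠ 0 := ne_of_gt hδ
  -- bounds for any p ∈ S
  have hbnd : ∀ p ∈ S, ∀ j, a j ≤ v j ⬝ᵥ p ∧ v j ⬝ᵥ p ≤ b j := by
    intro p hp j
    have h1 := hp _ (hmem j).1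
    have h2 := hp _ (hmem j).2
    have e1 : (x + δ • v j) - x = δ • v j := by abel
    have e2 : (x - δ • v j) - x = -(δ • v j) := by abel
    rw [e1, dotProduct_smul] at h1
    rw [e2, dotProduct_neg, dotProduct_smul] at h2
    have hc : v j ⬝ᵥ p = p ⬝ᵥ v j := dotProduct_comm _ _
    constructor
    · rw [hc, ha, div_le_iff₀ hδ]; simp only [smul_eq_mul] at h2; linarith
    · rw [hc, hb, le_div_iff₀ hδ]; simp only [smul_eq_mul] at h1; linarith
  -- S is contained in the preimage of a box
  have hsub : S ⊆ (Matrix.toLin' M) ⁻¹' Set.Icc a b := by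
    intro p hp
    simp only [Set.mem_preimage, Set.mem_Icc, Matrix.toLin'_apply, Pi.le_def]
    constructor
    · intro j; exact (hbnd p hp j).1
    · intro j; exact (hbnd p hp j).2
  -- determinant
  have hMMT : M * Mᵀ = 1 := by
    ext i j
    simp only [Matrix.mul_apply, Matrix.transpose_apply, Matrix.one_apply, hM, Matrix.of_apply]
    rw [← hv i j]; rfl
  have hdet2 : M.det * M.det = 1 := by
    have := congrArg Matrix.det hMMT
    rwa [Matrix.det_mul, Matrix.det_transpose, Matrix.det_one] at this
  have hdetabs : |M.det| = 1 := by
    rcases mul_self_eq_one_iff.1 hdet2 with h | h <;> simp [h]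
  have hdetne : M.det ≠ 0 := by
    intro h; rw [h] at hdet2; simp at hdet2
  have hdetlin : LinearMap.det (Matrix.toLin' M) = M.det := LinearMap.det_toLin' M
  -- a ≤ b from nonemptiness
  have hab : ∀ j, a j ≤ b j := by
    obtain ⟨p, hp⟩ := hne
    intro j
    exact le_trans (hbnd p hp j).1 (hbnd p hp j).2
  calc volume S ≤ volume ((Matrix.toLin' M) ⁻¹' Set.Icc a b) := measure_mono hsub
    _ = ENNReal.ofReal |(LinearMap.det (Matrix.toLin' M))⁻¹| * volume (Set.Icc a b) := by
        rw [Measure.addHaar_preimage_linearMap]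
        rw [hdetlin]; exact hdetne
    _ = volume (Set.Icc a b) := by
        rw [hdetlin, abs_inv, hdetabs]; simp
    _ = ∏ j, ENNReal.ofReal (b j - a j) := Real.volume_Icc_pi
    _ = ENNReal.ofReal (∏ j, (b j - a j)) := by
        rw [← ENNReal.ofReal_prod_of_nonneg]
        intro j _; linarith [hab j]
    _ = ENNReal.ofReal (δ ^ d *
        ∏ j, (w (x + δ • v j) - 2 * w x + w (x - δ • v j)) / δ ^ 2) := by
        congr 1
        have hc : ∀ j, b j - a j =
            (w (x + δ • v j) - 2 * w x + w (x - δ • v j)) / δ := by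
          intro j; rw [hb, ha]; field_simp; ring
        simp_rw [hc]
        rw [Finset.prod_div_distrib, Finset.prod_div_distrib, Finset.prod_const,
          Finset.prod_const, Finset.card_univ, Fintype.card_fin]
        field_simp
        ring
end
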